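/- Let Y and Z be subspaces of a metric space (X,d) that are tangent equivalent at a ∈ Y ∩ Z w.r.t. a normalizing sequence r̃, and let Z̃_{a,r̃} be a maximal self-stable family in Z̃. Then the family [Z̃_{a,r̃}]_Y := {ỹ ∈ Ỹ : ∃ z̃ ∈ Z̃_{a,r̃}, d̃_{r̃}(ỹ,z̃) = 0} is maximal self-stable in Ỹ, and [[Z̃_{a,r̃}]_Y]_Z = Z̃_{a,r̃} = [Z̃_{a,r̃}]_Z. -/

import Mathlib

open Filter Topology

/-- A normalizing sequence: positive reals tending to 0. -/
def Normalizing (r : ℕ → ℝ) : Prop :=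
  (∀ n, 0 < r n) ∧ Tendsto r atTop (nhds 0)

/-- Two sequences in `X` are mutually stable w.r.t. `r`:
the limit of `dist (x n) (y n) / r n` exists and is finite. -/
def MutuallyStable {X : Type*} [MetricSpace X] (r : ℕ → ℝ) (x y : ℕ → X) : Prop :=
  ∃ L : ℝ, Tendsto (fun n => dist (x n) (y n) / r n) atTop (nhds L)

/-- The normalized limit distance `d̃`. -/
noncomputable def dtilde {X : Type*} [MetricSpace X] (r : ℕ → ℝ) (x y : ℕ → X) : ℝ :=
  limUnder atTop (fun n => dist (x n) (y n) / r n)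

/-- A family is self-stable if every two members are mutually stable. -/
def SelfStable {X : Type*} [MetricSpace X] (r : ℕ → ℝ) (F : Set (ℕ → X)) : Prop :=
  ∀ x ∈ F, ∀ y ∈ F, MutuallyStable r x y

/-- A family is maximal self-stable if it is self-stable and maximal with that property. -/
def MaximalSelfStable {X : Type*} [MetricSpace X] (r : ℕ → ℝ) (F : Set (ℕ → X)) : Prop :=
  SelfStable r F ∧ ∀ G, SelfStable r G → F ⊆ G → G = F

/-- A sequence lies in the subspace `Y`. -/
def InSubspace {X : Type*} (Y : Set X) (x : ℕ → X) : Prop := ∀ n, x n ∈ Y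

/-- A family of sequences in the subspace `Y` that is self-stable and maximal among
self-stable families of sequences in `Y`. -/
def MaximalSelfStableIn {X : Type*} [MetricSpace X] (Y : Set X) (r : ℕ → ℝ)
    (F : Set (ℕ → X)) : Prop :=
  (∀ x ∈ F, InSubspace Y x) ∧ SelfStable r F ∧
    ∀ G, (∀ x ∈ G, InSubspace Y x) → SelfStable r G → F ⊆ G → G = F

/-- `[F]_Y`: all sequences in `Y` at normalized distance 0 from some member of `F`. -/
def bracket {X : Type*} [MetricSpace X] (Y : Set X) (r : ℕ → ℝ) (F : Set (ℕ → X)) :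
    Set (ℕ → X) :=
  {y | InSubspace Y y ∧ ∃ x ∈ F, Tendsto (fun n => dist (x n) (y n) / r n) atTop (nhds 0)}

/-- `Y` and `Z` are tangent equivalent at `a` w.r.t. `r`. -/
def TangentEquiv {X : Type*} [MetricSpace X] (Y Z : Set X) (a : X) (r : ℕ → ℝ) : Prop :=
  (∀ y : ℕ → X, InSubspace Y y → MutuallyStable r y (fun _ => a) →
    ∃ z : ℕ → X, InSubspace Z z ∧
      Tendsto (fun n => dist (y n) (z n) / r n) atTop (nhds 0)) ∧
  (∀ z : ℕ → X, InSubspace Z z → MutuallyStable r z (fun _ => a) →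
    ∃ y : ℕ → X, InSubspace Y y ∧
      Tendsto (fun n => dist (z n) (y n) / r n) atTop (nhds 0))

/-- `Y` and `Z` are strongly tangent equivalent at `a`. -/
def StronglyTangentEquiv {X : Type*} [MetricSpace X] (Y Z : Set X) (a : X) : Prop :=
  ∀ r : ℕ → ℝ, Normalizing r → TangentEquiv Y Z a r

/-- `ε_a(t, Z, Y) = sup_{z ∈ S^Z(a,t)} inf_{y ∈ Y} dist z y`
(here the first set argument is `Y`, the second is `Z`). -/
noncomputable def epsZY {X : Type*} [MetricSpace X] (Y Z : Set X) (a : X) (t : ℝ) : ℝ :=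
  sSup ((fun z => sInf ((fun y => dist z y) '' Y)) '' {z ∈ Z | dist a z = t})

/-!
Sequences at normalized distance zero are interchangeable as far as mutual stability goes.
By tangent equivalence (applicable since every member of `F` is stable with `ã`), every member
of `F` is at distance zero from a member of `[F]_Y`. Hence a sequence of `Ỹ` that is stable with
all of `[F]_Y` is stable with all of `F`, in particular with `ã`; tangent equivalence moves it,
at distance zero, to a sequence of `Z̃` that is again stable with all of `F`, and which therefore
lies in `F` by maximality.
-/

/-- `d̃_r(x, y) = 0`, stated as a limit so that it does not rely on the junk value of `limUnder`
in `dtilde`. -/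
def ZeroDist {X : Type*} [MetricSpace X] (r : ℕ → ℝ) (x y : ℕ → X) : Prop :=
  Tendsto (fun n => dist (x n) (y n) / r n) atTop (𝓝 0)

section

variable {X : Type*} [MetricSpace X] {r : ℕ → ℝ} {W Y Z : Set X} {F G : Set (ℕ → X)}

namespace ZeroDist

variable {x y z : ℕ → X}

lemma refl (r : ℕ → ℝ) (x : ℕ → X) : ZeroDist r x x := by
  simp only [ZeroDist, dist_self, zero_div, tendsto_const_nhds]

lemma symm (h : ZeroDist r x y) : ZeroDist r y x := by
  simpa only [ZeroDist, dist_comm] using h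

lemma trans (hxy : ZeroDist r x y) (hyz : ZeroDist r y z) : ZeroDist r x z := by
  have hsum := (hxy.add hyz).norm
  rw [add_zero, norm_zero] at hsum
  refine squeeze_zero_norm (fun n => ?_) hsum
  rw [← add_div, norm_div, norm_div]
  gcongr
  rw [Real.norm_of_nonneg dist_nonneg, Real.norm_of_nonneg (by positivity)]
  exact dist_triangle _ _ _

end ZeroDist

namespace MutuallyStable

variable {x y w : ℕ → X}

lemma refl (r : ℕ → ℝ) (x : ℕ → X) : MutuallyStable r x x :=
  ⟨0, ZeroDist.refl r x⟩

lemma symm (h : MutuallyStable r x y) : MutuallyStable r y x := by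
  obtain ⟨L, hL⟩ := h
  exact ⟨L, by simpa only [dist_comm] using hL⟩

lemma congr_left (hxy : ZeroDist r x y) (h : MutuallyStable r x w) : MutuallyStable r y w := by
  obtain ⟨L, hL⟩ := h
  have hxy' := hxy.norm
  rw [norm_zero] at hxy'
  have hdiff : Tendsto (fun n => (dist (y n) (w n) - dist (x n) (w n)) / r n) atTop (𝓝 0) := by
    refine squeeze_zero_norm (fun n => ?_) hxy'
    rw [norm_div, norm_div, Real.norm_eq_abs, Real.norm_of_nonneg dist_nonneg,
      dist_comm (x n) (y n)]
    gcongr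
    exact abs_dist_sub_le (y n) (x n) (w n)
  have hsum := hL.add hdiff
  rw [add_zero] at hsum
  exact ⟨L, hsum.congr fun n => by ring⟩

lemma congr_right (hwy : ZeroDist r w y) (h : MutuallyStable r x w) : MutuallyStable r x y :=
  (h.symm.congr_left hwy).symm

end MutuallyStable

lemma subset_bracket (hFY : ∀ x ∈ F, InSubspace Y x) : F ⊆ bracket Y r F :=
  fun x hx => ⟨hFY x hx, x, hx, ZeroDist.refl r x⟩

lemma bracket_bracket_subset : bracket W r (bracket Y r F) ⊆ bracket W r F := by
  rintro w ⟨hwW, y, ⟨-, f, hf, hfy⟩, hyw⟩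
  exact ⟨hwW, f, hf, ZeroDist.trans hfy hyw⟩

lemma mutuallyStable_of_mem_bracket {g f : ℕ → X} (hg : ∀ y ∈ G, MutuallyStable r g y)
    (hf : f ∈ bracket W r G) : MutuallyStable r g f := by
  obtain ⟨-, y, hy, hyf⟩ := hf
  exact (hg y hy).congr_right hyf

lemma SelfStable.bracket (hF : SelfStable r F) : SelfStable r (bracket Y r F) := by
  rintro y₁ ⟨-, f₁, hf₁, hfy₁⟩ y₂ ⟨-, f₂, hf₂, hfy₂⟩
  exact ((hF f₁ hf₁ f₂ hf₂).congr_left hfy₁).congr_right hfy₂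

namespace MaximalSelfStableIn

lemma bracket_eq (hF : MaximalSelfStableIn Z r F) : bracket Z r F = F :=
  hF.2.2 _ (fun _ hx => hx.1) hF.2.1.bracket (subset_bracket hF.1)

lemma mem_of_forall_mutuallyStable (hF : MaximalSelfStableIn Z r F) {z : ℕ → X}
    (hz : InSubspace Z z) (hzF : ∀ f ∈ F, MutuallyStable r z f) : z ∈ F := by
  have hins : insert z F = F := by
    refine hF.2.2 _ ?_ ?_ (Set.subset_insert z F)
    · rintro x (rfl | hx)
      exacts [hz, hF.1 x hx]
    · rintro x (rfl | hx) w (rfl | hw)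
      exacts [MutuallyStable.refl r _, hzF w hw, (hzF x hx).symm, hF.2.1 x hx w hw]
  exact hins ▸ Set.mem_insert z F

end MaximalSelfStableIn

namespace TangentEquiv

variable {a : X}

lemma subset_bracket_bracket (hYZ : TangentEquiv Y Z a r) (hFZ : ∀ x ∈ F, InSubspace Z x)
    (hFa : ∀ x ∈ F, MutuallyStable r x fun _ => a) : F ⊆ bracket Z r (bracket Y r F) := by
  intro f hf
  obtain ⟨y, hyY, hfy⟩ := hYZ.2 f (hFZ f hf) (hFa f hf)
  exact ⟨hFZ f hf, y, ⟨hyY, f, hf, hfy⟩, ZeroDist.symm hfy⟩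

lemma maximalSelfStableIn_bracket (hYZ : TangentEquiv Y Z a r)
    (hF : MaximalSelfStableIn Z r F) (haF : (fun _ => a) ∈ F) :
    MaximalSelfStableIn Y r (bracket Y r F) := by
  refine ⟨fun y hy => hy.1, hF.2.1.bracket, fun G hGY hGss hsub => ?_⟩
  refine Set.Subset.antisymm (fun g hg => ?_) hsub
  have hFB := hYZ.subset_bracket_bracket hF.1 fun x hx => hF.2.1 x hx _ haF
  have hgF : ∀ f ∈ F, MutuallyStable r g f := fun f hf =>
    mutuallyStable_of_mem_bracket (fun y hy => hGss g hg y (hsub hy)) (hFB hf)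
  obtain ⟨z, hzZ, hgz⟩ := hYZ.1 g (hGY g hg) (hgF _ haF)
  have hzF : z ∈ F :=
    hF.mem_of_forall_mutuallyStable hzZ fun f hf => (hgF f hf).congr_left hgz
  exact ⟨hGY g hg, z, hzF, ZeroDist.symm hgz⟩

end TangentEquiv

end

theorem stmt_14_general {X : Type*} [MetricSpace X] (Y Z : Set X) (a : X) (r : ℕ → ℝ)
    (hYZ : TangentEquiv Y Z a r)
    (F : Set (ℕ → X)) (hF : MaximalSelfStableIn Z r F) (haF : (fun _ => a) ∈ F) :
    MaximalSelfStableIn Y r (bracket Y r F) ∧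
      bracket Z r (bracket Y r F) = F ∧ bracket Z r F = F := by
  have hFZ : bracket Z r F = F := hF.bracket_eq
  refine ⟨hYZ.maximalSelfStableIn_bracket hF haF, ?_, hFZ⟩
  exact (bracket_bracket_subset.trans hFZ.subset).antisymm
    (hYZ.subset_bracket_bracket hF.1 fun x hx => hF.2.1 x hx _ haF)

/-- If `Y` and `Z` are tangent equivalent at `a` w.r.t. `r`, then for any maximal self-stable
family in `Z̃` containing `ã`, the family `[Z̃_{a,r̃}]_Y` is maximal self-stable in `Ỹ`, and
`[[Z̃_{a,r̃}]_Y]_Z = Z̃_{a,r̃} = [Z̃_{a,r̃}]_Z`. -/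
theorem stmt_14 {X : Type*} [MetricSpace X] (Y Z : Set X) (a : X)
    (haY : a ∈ Y) (haZ : a ∈ Z) (r : ℕ → ℝ) (hr : Normalizing r)
    (hYZ : TangentEquiv Y Z a r)
    (F : Set (ℕ → X)) (hF : MaximalSelfStableIn Z r F) (haF : (fun _ => a) ∈ F) :
    MaximalSelfStableIn Y r (bracket Y r F) ∧
      bracket Z r (bracket Y r F) = F ∧ bracket Z r F = F :=
  stmt_14_general Y Z a r hYZ F hF haF
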